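/- arXiv:2404.02365 — 5 statements merged into one kernel-verified Lean document; each statement's English description precedes it below -/
import Mathlib

section
/- Assume in addition that 𝔤 is semisimple. Then for all a, b ∈ 𝔩 one has κ_𝔤(a,b) = 2·tr_𝔲(ad(a)∘ad(b)) + tr_𝔩(ad(a)∘ad(b)). -/
open Module LinearMap

/-- The eigenspace of `ad ξ` with eigenvalue the integer `j`; for a grading element `ξ`
these are the graded pieces `𝔤_j`. -/
def adEig {g : Type*} [LieRing g] [LieAlgebra ℂ g] (ξ : g) (j : ℤ) : Submodule ℂ g :=
  Module.End.eigenspace (LieAlgebra.ad ℂ g ξ) (j : ℂ)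

/-- The trace of an endomorphism `f` restricted to an `f`-invariant subspace `W`. -/
noncomputable def traceOn {g : Type*} [AddCommGroup g] [Module ℂ g]
    (W : Submodule ℂ g) (f : g →ₗ[ℂ] g) (hf : ∀ x ∈ W, f x ∈ W) : ℂ :=
  LinearMap.trace ℂ W (f.restrict hf)

/-!
Split `𝔤 = 𝔤_{<0} ⊕ 𝔤_0 ⊕ 𝔤_{>0}`. Since `a, b ∈ 𝔤_0`, `ad a ∘ ad b` preserves each piece, so
`κ(a, b)` is the sum of its three traces. The invariant form `κ` pairs `𝔤_i` and `𝔤_j` trivially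
unless `i + j = 0`, and it is nondegenerate by Cartan's criterion, so it is a perfect pairing of
`𝔤_{<0}` with `𝔤_{>0}`. Under this pairing `ad a ∘ ad b` on `𝔤_{<0}` is adjoint to `ad b ∘ ad a`
on `𝔤_{>0}`, hence the traces on `𝔤_{<0}` and on `𝔤_{>0}` agree.
-/

theorem iSupIndep.iSup_fiber {α ι κ : Type*} [CompleteLattice α] [IsModularLattice α]
    [IsCompactlyGenerated α] {t : ι → α} (ht : iSupIndep t) (f : ι → κ) :
    iSupIndep fun k ↦ ⨆ (i) (_ : f i = k), t i := by
  intro k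
  refine (ht.disjoint_biSup_biSup (s := {i | f i = k}) (t := {i | f i ≠ k})
    (Set.disjoint_left.mpr fun _ h h' ↦ h' h)).mono le_rfl ?_
  refine iSup₂_le fun k' hk' ↦ iSup₂_le fun i hi ↦ ?_
  exact le_biSup t (show f i ≠ k from hi ▸ hk')

theorem LinearMap.trace_eq_trace_of_isPerfPair {R M N : Type*} [CommRing R]
    [AddCommGroup M] [Module R M] [AddCommGroup N] [Module R N] [Module.Free R N]
    [Module.Finite R N] (p : M →ₗ[R] N →ₗ[R] R) [p.IsPerfPair] {f : Module.End R M}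
    {g : Module.End R N} (h : ∀ x y, p (f x) y = p x (g y)) :
    trace R M f = trace R N g := by
  have hf : f = p.toPerfPair.symm.conj (Dual.transpose g) := by
    ext x
    apply p.toPerfPair.injective
    ext y
    simp [LinearEquiv.conj_apply, Dual.transpose_apply, h]
  rw [hf, trace_conj', trace_transpose']

namespace LieAlgebra

open Module.End

variable {K L : Type*} [Field K] [LieRing L] [LieAlgebra K L] {ξ : L}

theorem killingForm_apply_eq_zero_of_mem_eigenspace_of_add_ne_zero {μ ν : K} (hμν : μ + ν ≠ 0)
    {x y : L} (hx : x ∈ eigenspace (ad K L ξ) μ) (hy : y ∈ eigenspace (ad K L ξ) ν) :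
    killingForm K L x y = 0 := by
  rw [mem_eigenspace_iff, ad_apply] at hx hy
  have h := LieModule.traceForm_apply_lie_apply' K L L ξ x y
  rw [hx, hy, map_smul, map_smul, LinearMap.smul_apply, smul_eq_mul, smul_eq_mul] at h
  have : (μ + ν) * killingForm K L x y = 0 := by linear_combination h
  exact (mul_eq_zero.mp this).resolve_left hμν

theorem mapsTo_ad_eigenspace_of_lie_eq_zero {c : L} (hc : ⁅ξ, c⁆ = 0) (μ : K) :
    Set.MapsTo (ad K L c) (eigenspace (ad K L ξ) μ) (eigenspace (ad K L ξ) μ) := by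
  intro x hx
  rw [SetLike.mem_coe, mem_eigenspace_iff, ad_apply] at hx ⊢
  rw [ad_apply, leibniz_lie, hc, zero_lie, zero_add, hx, lie_smul]

variable (K) in
/-- `gradedPart K ξ (-1)`, `gradedPart K ξ 0` and `gradedPart K ξ 1` are `ū`, `𝔩` and `𝔲`. -/
def gradedPart (ξ : L) (s : SignType) : Submodule K L :=
  ⨆ (j : ℤ) (_ : SignType.sign j = s), eigenspace (ad K L ξ) (j : K)

theorem mapsTo_ad_gradedPart_of_lie_eq_zero {c : L} (hc : ⁅ξ, c⁆ = 0) (s : SignType) :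
    Set.MapsTo (ad K L c) (gradedPart K ξ s) (gradedPart K ξ s) := by
  exact mapsTo_biSup_of_mapsTo {j : ℤ | SignType.sign j = s}
    (mapsTo_ad_eigenspace_of_lie_eq_zero (K := K) hc ·)

theorem gradedPart_zero : gradedPart K ξ 0 = eigenspace (ad K L ξ) 0 := by
  simp [gradedPart]

theorem gradedPart_one :
    gradedPart K ξ 1 = ⨆ (j : ℤ) (_ : 0 < j), eigenspace (ad K L ξ) (j : K) := by
  simp only [gradedPart, sign_eq_one_iff]

variable [CharZero K]

theorem killingForm_apply_eq_zero_of_mem_gradedPart_of_ne_neg {s s' : SignType} (hss' : s' ≠ -s)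
    {x y : L} (hx : x ∈ gradedPart K ξ s) (hy : y ∈ gradedPart K ξ s') :
    killingForm K L x y = 0 := by
  have hsum : ∀ i j : ℤ, SignType.sign i = s → SignType.sign j = s' → (i + j : K) ≠ 0 := by
    rintro i j rfl rfl hij
    rw [← Int.cast_add, Int.cast_eq_zero, add_eq_zero_iff_neg_eq] at hij
    exact hss' (hij ▸ Left.sign_neg i)
  suffices ∀ j : ℤ, SignType.sign j = s' → ∀ y ∈ eigenspace (ad K L ξ) (j : K),
      killingForm K L x y = 0 from
    (iSup₂_le fun j hj y hy ↦ this j hj y hy : gradedPart K ξ s' ≤ ker (killingForm K L x)) hy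
  intro j hj y hy
  have : gradedPart K ξ s ≤ ker ((killingForm K L).flip y) := iSup₂_le fun i hi z hz ↦
    killingForm_apply_eq_zero_of_mem_eigenspace_of_add_ne_zero (hsum i j hi hj) hz hy
  exact this hx

theorem isInternal_gradedPart (hξ : ⨆ j : ℤ, eigenspace (ad K L ξ) (j : K) = ⊤) :
    DirectSum.IsInternal (gradedPart K ξ) := by
  refine DirectSum.isInternal_submodule_of_iSupIndep_of_iSup_eq_top ?_ ?_
  · exact ((eigenspaces_iSupIndep (ad K L ξ)).comp Int.cast_injective).iSup_fiber _
  · unfold gradedPart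
    rw [iSup_comm]
    simpa using hξ

variable [IsKilling K L] (hξ : ⨆ j : ℤ, eigenspace (ad K L ξ) (j : K) = ⊤)
include hξ

theorem eq_zero_of_mem_gradedPart_of_forall_killingForm_eq_zero {s : SignType} {x : L}
    (hx : x ∈ gradedPart K ξ s) (h : ∀ y ∈ gradedPart K ξ (-s), killingForm K L x y = 0) :
    x = 0 := by
  have : ⊤ ≤ ker (killingForm K L x) := by
    rw [← (isInternal_gradedPart hξ).submodule_iSup_eq_top]
    refine iSup_le fun s' y hy ↦ ?_
    by_cases hs' : s' = -s
    · exact h y (hs' ▸ hy)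
    · exact killingForm_apply_eq_zero_of_mem_gradedPart_of_ne_neg hs' hx hy
  rw [← Submodule.mem_bot K, ← IsKilling.ker_killingForm_eq_bot K L, mem_ker]
  exact ext fun y ↦ this Submodule.mem_top

theorem isPerfPair_killingForm_gradedPart [FiniteDimensional K L] :
    ((killingForm K L).compl₁₂ (gradedPart K ξ (-1)).subtype
      (gradedPart K ξ 1).subtype).IsPerfPair := by
  refine .of_injective ((injective_iff_map_eq_zero _).mpr fun x hx ↦ ?_)
    ((injective_iff_map_eq_zero _).mpr fun y hy ↦ ?_)
  · exact Subtype.ext <| eq_zero_of_mem_gradedPart_of_forall_killingForm_eq_zero hξ x.2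
      fun y hy ↦ congr($hx ⟨y, hy⟩)
  · refine Subtype.ext <| eq_zero_of_mem_gradedPart_of_forall_killingForm_eq_zero hξ y.2
      fun x hx ↦ ?_
    rw [LieModule.traceForm_comm]
    exact congr($hy ⟨x, hx⟩)

variable [FiniteDimensional K L] {a b : L} (ha : ⁅ξ, a⁆ = 0) (hb : ⁅ξ, b⁆ = 0)
include ha hb

theorem trace_restrict_gradedPart_neg_one_eq
    (hneg : Set.MapsTo (ad K L a ∘ₗ ad K L b) (gradedPart K ξ (-1)) (gradedPart K ξ (-1)))
    (hpos : Set.MapsTo (ad K L a ∘ₗ ad K L b) (gradedPart K ξ 1) (gradedPart K ξ 1)) :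
    trace K _ ((ad K L a ∘ₗ ad K L b).restrict hneg) =
      trace K _ ((ad K L a ∘ₗ ad K L b).restrict hpos) := by
  have := isPerfPair_killingForm_gradedPart hξ
  have ha₁ := mapsTo_ad_gradedPart_of_lie_eq_zero (K := K) ha 1
  have hb₁ := mapsTo_ad_gradedPart_of_lie_eq_zero (K := K) hb 1
  calc trace K _ ((ad K L a ∘ₗ ad K L b).restrict hneg)
      = trace K _ ((ad K L b).restrict hb₁ * (ad K L a).restrict ha₁) := by
        refine trace_eq_trace_of_isPerfPair ((killingForm K L).compl₁₂
          (gradedPart K ξ (-1)).subtype (gradedPart K ξ 1).subtype) fun x y ↦ ?_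
        change killingForm K L ⁅a, ⁅b, (x : L)⁆⁆ y = killingForm K L x ⁅b, ⁅a, (y : L)⁆⁆
        rw [LieModule.traceForm_apply_lie_apply', LieModule.traceForm_apply_lie_apply', neg_neg]
    _ = trace K _ ((ad K L a ∘ₗ ad K L b).restrict hpos) := by
        rw [trace_mul_comm, Module.End.mul_eq_comp, ← restrict_comp]

theorem killingForm_eq_two_mul_trace_gradedPart_add_trace
    (h₀ : Set.MapsTo (ad K L a ∘ₗ ad K L b) (gradedPart K ξ 0) (gradedPart K ξ 0))
    (hpos : Set.MapsTo (ad K L a ∘ₗ ad K L b) (gradedPart K ξ 1) (gradedPart K ξ 1)) :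
    killingForm K L a b = 2 * trace K _ ((ad K L a ∘ₗ ad K L b).restrict hpos) +
      trace K _ ((ad K L a ∘ₗ ad K L b).restrict h₀) := by
  have hT s := (mapsTo_ad_gradedPart_of_lie_eq_zero (K := K) ha s).comp
    (mapsTo_ad_gradedPart_of_lie_eq_zero hb s)
  rw [killingForm_apply_apply, trace_eq_sum_trace_restrict (isInternal_gradedPart hξ) hT]
  have : (Finset.univ : Finset SignType) = {0, -1, 1} := rfl
  rw [this, Finset.sum_insert (by decide), Finset.sum_insert (by decide), Finset.sum_singleton,
    trace_restrict_gradedPart_neg_one_eq hξ ha hb _ hpos]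
  ring

end LieAlgebra

open LieAlgebra

/-- if `𝔤` is semisimple and graded by the grading element `ξ`, with
`𝔩 = 𝔤₀` and `𝔲 = ⊕_{j>0} 𝔤_j`, then for all `a, b ∈ 𝔩` one has
`κ_𝔤(a,b) = 2·tr_𝔲(ad a ∘ ad b) + tr_𝔩(ad a ∘ ad b)`. -/
theorem killingForm_eq_two_mul_trace_nilrad_add_trace_levi
    (g : Type*) [LieRing g] [LieAlgebra ℂ g] [FiniteDimensional ℂ g]
    [LieAlgebra.IsSemisimple ℂ g]
    (ξ : g)
    (hdiag : ⨆ j : ℤ, adEig ξ j = ⊤)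
    (l u : Submodule ℂ g)
    (hl : l = adEig ξ 0)
    (hu : u = ⨆ j : ℤ, ⨆ _ : 0 < j, adEig ξ j)
    (hll : ∀ a ∈ l, ∀ x ∈ l, ⁅a, x⁆ ∈ l)
    (hlu : ∀ a ∈ l, ∀ x ∈ u, ⁅a, x⁆ ∈ u)
    (a b : g) (ha : a ∈ l) (hb : b ∈ l) :
    killingForm ℂ g a b
      = 2 * traceOn u ((LieAlgebra.ad ℂ g a) ∘ₗ (LieAlgebra.ad ℂ g b))
            (fun x hx => hlu a ha _ (hlu b hb x hx))
        + traceOn l ((LieAlgebra.ad ℂ g a) ∘ₗ (LieAlgebra.ad ℂ g b))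
            (fun x hx => hll a ha _ (hll b hb x hx)) := by
  have hξa : ⁅ξ, a⁆ = 0 := by simpa [hl, adEig] using ha
  have hξb : ⁅ξ, b⁆ = 0 := by simpa [hl, adEig] using hb
  obtain rfl : l = gradedPart ℂ ξ 0 := by rw [hl, gradedPart_zero, adEig, Int.cast_zero]
  obtain rfl : u = gradedPart ℂ ξ 1 := by rw [hu, gradedPart_one]; rfl
  exact killingForm_eq_two_mul_trace_gradedPart_add_trace hdiag hξa hξb _ _
end

section
/- Assume 𝔤 is semisimple. Then for all a, b in the centre of 𝔩 (i.e. a,b ∈ 𝔩 with ⁅a,x⁆ = 0 and ⁅b,x⁆ = 0 for all x ∈ 𝔩): κ_𝔤(a,b) = 2·tr_𝔲(ad(a)∘ad(b)). Consequently, for every 𝔤-invariant symmetric bilinear form κ₀ on 𝔤 and every k, h∨ ∈ ℂ with κ_𝔤 = 2h∨·κ₀, one has k·κ₀(a,b) + tr_𝔲(ad(a)∘ad(b)) = (k + h∨)·κ₀(a,b) for all such a, b; that is, (k·κ₀ − κ_c^𝔭) restricted to the centre of 𝔩 equals (k + h∨)·κ₀. -/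
open Module LinearMap

/-!
Grouping the `ad ξ`-eigenspaces by the sign of the eigenvalue gives `𝔤 = ū ⊕ 𝔩 ⊕ 𝔲`. Invariance of
the Killing form makes `𝔤ᵢ` and `𝔤ⱼ` orthogonal unless `i + j = 0`; together with its
nondegeneracy (Cartan's criterion) this makes `κ_𝔤` a perfect pairing between `ū` and `𝔲`. As
`⁅a, b⁆ = 0`, the operator `ad a ∘ ad b` is self-adjoint for `κ_𝔤`, so its traces on `ū` and on `𝔲`
agree, and it vanishes on `𝔩` because `a` is central there. Hence
`κ_𝔤(a, b) = tr_ū + tr_𝔩 + tr_𝔲 = 2 tr_𝔲`.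
-/

theorem iSupIndep.biSup_fiber {α ι κ : Type*} [CompleteLattice α] [IsModularLattice α]
    [IsCompactlyGenerated α] {f : ι → α} (hf : iSupIndep f) (π : ι → κ) :
    iSupIndep fun k => ⨆ i ∈ π ⁻¹' {k}, f i := by
  intro k
  refine (hf.disjoint_biSup_biSup disjoint_compl_right).mono_right
    (iSup₂_le fun k' hk' => biSup_mono fun i hi => ?_)
  simp_all

theorem LinearMap.trace_eq_of_isPerfPair {K M N : Type*} [Field K] [AddCommGroup M] [Module K M]
    [AddCommGroup N] [Module K N] [FiniteDimensional K N] (p : M →ₗ[K] N →ₗ[K] K) [p.IsPerfPair]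
    {f : Module.End K M} {f' : Module.End K N} (h : ∀ x y, p (f x) y = p x (f' y)) :
    trace K M f = trace K N f' := by
  have hconj : p.toPerfPair.conj f = Dual.transpose (R := K) f' := by
    ext φ y
    obtain ⟨x, rfl⟩ := p.toPerfPair.surjective φ
    simp [LinearEquiv.conj_apply, Dual.transpose_apply, h]
  rw [← trace_conj' f p.toPerfPair, hconj, trace_transpose']

theorem killingForm_lie_lie_of_lie_eq_zero {R L : Type*} [CommRing R] [LieRing L]
    [LieAlgebra R L] [Module.Free R L] [Module.Finite R L] {a b : L} (hab : ⁅a, b⁆ = 0)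
    (x y : L) : killingForm R L ⁅a, ⁅b, x⁆⁆ y = killingForm R L x ⁅a, ⁅b, y⁆⁆ := by
  have hcomm : ⁅a, ⁅b, y⁆⁆ = ⁅b, ⁅a, y⁆⁆ := by rw [leibniz_lie, hab, zero_lie, zero_add]
  rw [hcomm, LieModule.traceForm_apply_lie_apply', LieModule.traceForm_apply_lie_apply', neg_neg]

section Grading

variable {g : Type*} [LieRing g] [LieAlgebra ℂ g] (ξ : g)

theorem mem_adEig {x : g} {j : ℤ} : x ∈ adEig ξ j ↔ ⁅ξ, x⁆ = (j : ℂ) • x := by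
  rw [adEig, Module.End.mem_eigenspace_iff, LieAlgebra.ad_apply]

theorem iSupIndep_adEig : iSupIndep (adEig ξ) :=
  (Module.End.eigenspaces_iSupIndep (LieAlgebra.ad ℂ g ξ)).comp Int.cast_injective

variable {ξ}

theorem lie_mem_adEig {i j : ℤ} {x y : g} (hx : x ∈ adEig ξ i) (hy : y ∈ adEig ξ j) :
    ⁅x, y⁆ ∈ adEig ξ (i + j) := by
  rw [mem_adEig] at hx hy ⊢
  rw [leibniz_lie, hx, hy, smul_lie, lie_smul, Int.cast_add, add_smul, add_comm]

theorem mapsTo_ad_of_mem_adEig_zero {a : g} (ha : a ∈ adEig ξ 0) (j : ℤ) :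
    Set.MapsTo (LieAlgebra.ad ℂ g a) (adEig ξ j) (adEig ξ j) := fun x hx => by
  have h := lie_mem_adEig ha hx
  rwa [zero_add] at h

theorem killingForm_eq_zero_of_mem_adEig [FiniteDimensional ℂ g] {i j : ℤ} (hij : i + j ≠ 0)
    {x y : g} (hx : x ∈ adEig ξ i) (hy : y ∈ adEig ξ j) : killingForm ℂ g x y = 0 := by
  have h := LieModule.traceForm_apply_lie_apply' ℂ g g ξ x y
  rw [mem_adEig] at hx hy
  rw [hx, hy, map_smul, LinearMap.smul_apply, map_smul, smul_eq_mul, smul_eq_mul] at h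
  have hij' : ((i + j : ℤ) : ℂ) ≠ 0 := by exact_mod_cast hij
  refine (mul_eq_zero.mp ?_).resolve_left hij'
  push_cast
  linear_combination h

variable (ξ) in
def signPart (σ : SignType) : Submodule ℂ g :=
  ⨆ j ∈ (SignType.sign : ℤ → SignType) ⁻¹' {σ}, adEig ξ j

theorem signPart_zero : signPart ξ 0 = adEig ξ 0 := by
  simp [signPart]

theorem signPart_one : signPart ξ 1 = ⨆ j : ℤ, ⨆ _ : 0 < j, adEig ξ j := by
  simp [signPart, sign_eq_one_iff]

theorem iSup_signPart : ⨆ σ, signPart ξ σ = ⨆ j, adEig ξ j := by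
  simp [signPart, iSup_comm (ι := SignType)]

theorem iSupIndep_signPart : iSupIndep (signPart ξ) :=
  (iSupIndep_adEig ξ).biSup_fiber _

theorem isInternal_signPart (hdiag : ⨆ j : ℤ, adEig ξ j = ⊤) :
    DirectSum.IsInternal (signPart ξ) :=
  DirectSum.isInternal_submodule_of_iSupIndep_of_iSup_eq_top iSupIndep_signPart
    (iSup_signPart.trans hdiag)

theorem killingForm_signPart_eq_zero [FiniteDimensional ℂ g] {σ τ : SignType} (hστ : σ ≠ -τ)
    {x y : g} (hx : x ∈ signPart ξ σ) (hy : y ∈ signPart ξ τ) : killingForm ℂ g x y = 0 := by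
  suffices signPart ξ σ ≤ (signPart ξ τ).dualAnnihilator.comap (killingForm ℂ g) from
    (Submodule.mem_dualAnnihilator _).mp (this hx) y hy
  refine iSup₂_le fun i hi x hx => ?_
  simp only [signPart, Submodule.dualAnnihilator_iSup_eq, Submodule.mem_comap, Submodule.mem_iInf,
    Submodule.mem_dualAnnihilator]
  intro j hj y hy
  refine killingForm_eq_zero_of_mem_adEig (fun hij => hστ ?_) hx hy
  rw [← Set.mem_singleton_iff.mp hi, ← Set.mem_singleton_iff.mp hj, eq_neg_of_add_eq_zero_left hij,
    Left.sign_neg]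

theorem eq_zero_of_killingForm_signPart_neg [FiniteDimensional ℂ g] [LieAlgebra.IsKilling ℂ g]
    (hdiag : ⨆ j : ℤ, adEig ξ j = ⊤) {σ : SignType} {x : g} (hx : x ∈ signPart ξ σ)
    (hxσ : ∀ y ∈ signPart ξ (-σ), killingForm ℂ g x y = 0) : x = 0 := by
  suffices killingForm ℂ g x = 0 by
    simpa only [LieAlgebra.IsKilling.ker_killingForm_eq_bot, Submodule.mem_bot] using
      LinearMap.mem_ker.mpr this
  have hann : killingForm ℂ g x ∈ (⨆ τ, signPart ξ τ).dualAnnihilator := by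
    simp only [Submodule.dualAnnihilator_iSup_eq, Submodule.mem_iInf, Submodule.mem_dualAnnihilator]
    intro τ y hy
    by_cases hτ : τ = -σ
    · exact hxσ y (hτ ▸ hy)
    · exact killingForm_signPart_eq_zero (fun h => hτ (by rw [h, neg_neg])) hx hy
  rwa [iSup_signPart, hdiag, Submodule.dualAnnihilator_top, Submodule.mem_bot] at hann

theorem mapsTo_signPart {F : Module.End ℂ g} (hF : ∀ j, Set.MapsTo F (adEig ξ j) (adEig ξ j))
    (σ : SignType) : Set.MapsTo F (signPart ξ σ) (signPart ξ σ) :=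
  mapsTo_biSup_of_mapsTo _ hF

theorem trace_eq_sum_trace_restrict_signPart [FiniteDimensional ℂ g]
    (hdiag : ⨆ j : ℤ, adEig ξ j = ⊤) {F : Module.End ℂ g}
    (hF : ∀ j, Set.MapsTo F (adEig ξ j) (adEig ξ j)) :
    trace ℂ g F = trace ℂ _ (F.restrict (mapsTo_signPart hF (-1)))
      + trace ℂ _ (F.restrict (mapsTo_signPart hF 0))
      + trace ℂ _ (F.restrict (mapsTo_signPart hF 1)) := by
  rw [trace_eq_sum_trace_restrict (isInternal_signPart hdiag) (mapsTo_signPart hF),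
    SignType.univ_eq, Finset.sum_insert (by decide), Finset.sum_insert (by decide),
    Finset.sum_singleton]
  ring

variable (ξ) in
noncomputable def signPairing [FiniteDimensional ℂ g] (σ : SignType) :
    signPart ξ σ →ₗ[ℂ] signPart ξ (-σ) →ₗ[ℂ] ℂ :=
  (killingForm ℂ g).compl₁₂ (signPart ξ σ).subtype (signPart ξ (-σ)).subtype

theorem isPerfPair_signPairing [FiniteDimensional ℂ g] [LieAlgebra.IsKilling ℂ g]
    (hdiag : ⨆ j : ℤ, adEig ξ j = ⊤) (σ : SignType) : (signPairing ξ σ).IsPerfPair := by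
  refine .of_injective (injective_iff_map_eq_zero _ |>.mpr fun x hx => ?_)
    (injective_iff_map_eq_zero _ |>.mpr fun y hy => ?_)
  · refine Subtype.ext (eq_zero_of_killingForm_signPart_neg hdiag x.2 fun y hy => ?_)
    exact LinearMap.congr_fun hx ⟨y, hy⟩
  · refine Subtype.ext (eq_zero_of_killingForm_signPart_neg hdiag y.2 fun x hx => ?_)
    rw [LieModule.traceForm_comm]
    exact LinearMap.congr_fun hy ⟨x, by rwa [neg_neg] at hx⟩

theorem trace_restrict_signPart_eq_neg [FiniteDimensional ℂ g] [LieAlgebra.IsKilling ℂ g]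
    (hdiag : ⨆ j : ℤ, adEig ξ j = ⊤) {F : Module.End ℂ g}
    (hF : ∀ j, Set.MapsTo F (adEig ξ j) (adEig ξ j))
    (hFκ : ∀ x y, killingForm ℂ g (F x) y = killingForm ℂ g x (F y)) (σ : SignType) :
    trace ℂ _ (F.restrict (mapsTo_signPart hF σ))
      = trace ℂ _ (F.restrict (mapsTo_signPart hF (-σ))) :=
  haveI := isPerfPair_signPairing hdiag σ
  (signPairing ξ σ).trace_eq_of_isPerfPair fun x y => hFκ x y

end Grading

theorem killingForm_eq_two_trace_nilrad_on_center_general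
    (g : Type*) [LieRing g] [LieAlgebra ℂ g] [FiniteDimensional ℂ g]
    [LieAlgebra.IsSemisimple ℂ g]
    (ξ : g)
    (hdiag : ⨆ j : ℤ, adEig ξ j = ⊤)
    (l u : Submodule ℂ g)
    (hl : l = adEig ξ 0)
    (hu : u = ⨆ j : ℤ, ⨆ _ : 0 < j, adEig ξ j)
    (hlu : ∀ a ∈ l, ∀ x ∈ u, ⁅a, x⁆ ∈ u)
    (a b : g) (ha : a ∈ l) (hb : b ∈ l)
    (haz : ∀ x ∈ l, ⁅a, x⁆ = 0) :
    killingForm ℂ g a b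
      = 2 * traceOn u ((LieAlgebra.ad ℂ g a) ∘ₗ (LieAlgebra.ad ℂ g b))
            (fun x hx => hlu a ha _ (hlu b hb x hx))
    ∧ ∀ (κ₀ : LinearMap.BilinForm ℂ g),
        (∀ x y : g, κ₀ x y = κ₀ y x) →
        (∀ c x y : g, κ₀ ⁅c, x⁆ y + κ₀ x ⁅c, y⁆ = 0) →
        ∀ k hV : ℂ, (∀ x y : g, killingForm ℂ g x y = 2 * hV * κ₀ x y) →
          k * κ₀ a b
              + traceOn u ((LieAlgebra.ad ℂ g a) ∘ₗ (LieAlgebra.ad ℂ g b))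
                  (fun x hx => hlu a ha _ (hlu b hb x hx))
            = (k + hV) * κ₀ a b := by
  subst hl
  obtain rfl : u = signPart ξ 1 := hu.trans signPart_one.symm
  have hF (j : ℤ) :
      Set.MapsTo (LieAlgebra.ad ℂ g a ∘ₗ LieAlgebra.ad ℂ g b) (adEig ξ j) (adEig ξ j) :=
    (mapsTo_ad_of_mem_adEig_zero ha j).comp (mapsTo_ad_of_mem_adEig_zero hb j)
  have hFl : (LieAlgebra.ad ℂ g a ∘ₗ LieAlgebra.ad ℂ g b).restrict (mapsTo_signPart hF 0) = 0 := by
    ext ⟨x, hx⟩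
    rw [signPart_zero] at hx
    exact haz _ (mapsTo_ad_of_mem_adEig_zero hb 0 hx)
  have hkilling : killingForm ℂ g a b
      = 2 * traceOn (signPart ξ 1) (LieAlgebra.ad ℂ g a ∘ₗ LieAlgebra.ad ℂ g b)
          (fun x hx => hlu a ha _ (hlu b hb x hx)) := by
    rw [killingForm_apply_apply, trace_eq_sum_trace_restrict_signPart hdiag hF, hFl, map_zero,
      trace_restrict_signPart_eq_neg hdiag hF (killingForm_lie_lie_of_lie_eq_zero (haz b hb)) (-1),
      add_zero]
    -- `-(-1 : SignType)` reduces to `1`: both summands are the trace on `signPart ξ 1`.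
    exact (two_mul _).symm
  refine ⟨hkilling, fun κ₀ _ _ k hV hκ => ?_⟩
  linear_combination (hkilling.symm.trans (hκ a b)) / 2

/-- for `a, b` in the centre of the Levi subalgebra `𝔩 = 𝔤₀`,
`κ_𝔤(a,b) = 2·tr_𝔲(ad a ∘ ad b)`; consequently for every invariant symmetric `κ₀` with
`κ_𝔤 = 2h∨·κ₀` one has `k·κ₀(a,b) + tr_𝔲(ad a ∘ ad b) = (k + h∨)·κ₀(a,b)`. -/
theorem killingForm_eq_two_trace_nilrad_on_center
    (g : Type*) [LieRing g] [LieAlgebra ℂ g] [FiniteDimensional ℂ g]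
    [LieAlgebra.IsSemisimple ℂ g]
    (ξ : g)
    (hdiag : ⨆ j : ℤ, adEig ξ j = ⊤)
    (l u : Submodule ℂ g)
    (hl : l = adEig ξ 0)
    (hu : u = ⨆ j : ℤ, ⨆ _ : 0 < j, adEig ξ j)
    (hll : ∀ a ∈ l, ∀ x ∈ l, ⁅a, x⁆ ∈ l)
    (hlu : ∀ a ∈ l, ∀ x ∈ u, ⁅a, x⁆ ∈ u)
    (a b : g) (ha : a ∈ l) (hb : b ∈ l)
    (haz : ∀ x ∈ l, ⁅a, x⁆ = 0) (hbz : ∀ x ∈ l, ⁅b, x⁆ = 0) :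
    killingForm ℂ g a b
      = 2 * traceOn u ((LieAlgebra.ad ℂ g a) ∘ₗ (LieAlgebra.ad ℂ g b))
            (fun x hx => hlu a ha _ (hlu b hb x hx))
    ∧ ∀ (κ₀ : LinearMap.BilinForm ℂ g),
        (∀ x y : g, κ₀ x y = κ₀ y x) →
        (∀ c x y : g, κ₀ ⁅c, x⁆ y + κ₀ x ⁅c, y⁆ = 0) →
        ∀ k hV : ℂ, (∀ x y : g, killingForm ℂ g x y = 2 * hV * κ₀ x y) →
          k * κ₀ a b
              + traceOn u ((LieAlgebra.ad ℂ g a) ∘ₗ (LieAlgebra.ad ℂ g b))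
                  (fun x hx => hlu a ha _ (hlu b hb x hx))
            = (k + hV) * κ₀ a b :=
  killingForm_eq_two_trace_nilrad_on_center_general g ξ hdiag l u hl hu hlu a b ha hb haz
end

section
/- Let κ be a 𝔤-invariant symmetric bilinear form on 𝔤 and set κ* = −κ − κ_𝔤 (the dual form). Then the form κ − κ_c^𝔭 vanishes on ⁅𝔩,𝔩⁆ × ⁅𝔩,𝔩⁆ if and only if κ*(a,b) = −κ_{⁅𝔭,𝔭⁆}(a,b) for all a,b ∈ ⁅𝔭,𝔭⁆, where ⁅𝔭,𝔭⁆ is the derived subalgebra of 𝔭 and κ_{⁅𝔭,𝔭⁆} denotes the Killing form of the Lie algebra ⁅𝔭,𝔭⁆. -/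
/-!
Write `𝔭' = ⁅𝔭, 𝔭⁆`, an ideal of `𝔭`. Splitting the trace over `𝔤` along `𝔭 ⊆ 𝔤` gives
`κ_𝔤 = κ_𝔭 + tr_{𝔤/𝔭}(ρ(·) ∘ ρ(·))` on `𝔭`, and on `𝔭'` the form `κ_𝔭` is `κ_{𝔭'}` because
`ad a ∘ ad b` maps `𝔭` into `𝔭'`. So `κ_𝔤 = κ_{𝔭'} − κ_c^𝔭` on `𝔭'`, and the right-hand side says
that `G = κ − κ_c^𝔭` vanishes on `𝔭' × 𝔭'`.

`G` is `ad ξ`-invariant, so `G(𝔤_i, 𝔤_j) = 0` unless `i + j = 0`. As `𝔭' ⊆ ⁅𝔩, 𝔩⁆ + ū` with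
`⁅𝔩, 𝔩⁆ ⊆ 𝔤_0` and `ū` of negative degrees, `G` vanishes on `𝔭' × 𝔭'` once it vanishes on
`⁅𝔩, 𝔩⁆ × ⁅𝔩, 𝔩⁆`.
-/

open Module LinearMap

/-- `κ_c^𝔭(a,b) = −tr_{𝔤/𝔭}(ρ(a)∘ρ(b))`, where `ρ` is the action on the quotient `𝔤/𝔭`
induced by the adjoint action. -/
noncomputable def kappaC {g : Type*} [LieRing g] [LieAlgebra ℂ g]
    (p : Submodule ℂ g) (a b : g)
    (hA : p ≤ p.comap (LieAlgebra.ad ℂ g a))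
    (hB : p ≤ p.comap (LieAlgebra.ad ℂ g b)) : ℂ :=
  - LinearMap.trace ℂ (g ⧸ p)
      ((Submodule.mapQ p p (LieAlgebra.ad ℂ g a) hA)
        ∘ₗ (Submodule.mapQ p p (LieAlgebra.ad ℂ g b) hB))

section Trace

variable {𝕜 V : Type*} [Field 𝕜] [AddCommGroup V] [Module 𝕜 V] [FiniteDimensional 𝕜 V]

theorem LinearMap.trace_eq_trace_restrict_add_trace_mapQ (W : Submodule 𝕜 V) (f : V →ₗ[𝕜] V)
    (hf : W ≤ W.comap f) :
    trace 𝕜 V f = trace 𝕜 W (f.restrict hf) + trace 𝕜 (V ⧸ W) (W.mapQ W f hf) := by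
  obtain ⟨W', hW⟩ := W.exists_isCompl
  have hrestrict : W.projectionOnto W' hW ∘ₗ f ∘ₗ W.subtype = f.restrict hf := by
    ext x
    simp [Submodule.projectionOnto_apply_of_mem_left hW (hf x.2)]
  have hmapQ : (W.quotientEquivOfIsCompl W' hW).conj (W.mapQ W f hf)
      = W'.projectionOnto W hW.symm ∘ₗ f ∘ₗ W'.subtype := by
    ext x
    simp [LinearEquiv.conj_apply]
  have hW_part : trace 𝕜 V (f ∘ₗ W.projection W' hW) = trace 𝕜 W (f.restrict hf) := by
    rw [← hrestrict, ← trace_comp_comm' (W.projectionOnto W' hW) (f ∘ₗ W.subtype)]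
    rfl
  have hW'_part : trace 𝕜 V (f ∘ₗ W'.projection W hW.symm)
      = trace 𝕜 (V ⧸ W) (W.mapQ W f hf) := by
    rw [← trace_conj' _ (W.quotientEquivOfIsCompl W' hW), hmapQ,
      ← trace_comp_comm' (W'.projectionOnto W hW.symm) (f ∘ₗ W'.subtype)]
    rfl
  rw [← hW_part, ← hW'_part, ← map_add, ← comp_add,
    Submodule.projection_add_projection_eq_id, comp_id]

end Trace

section TraceForm

variable {𝕜 L : Type*} [Field 𝕜] [LieRing L] [LieAlgebra 𝕜 L]

open LieModule LieAlgebra LieSubalgebra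

theorem LieModule.traceForm_eq_add_traceForm_quotient {M : Type*} [AddCommGroup M] [Module 𝕜 M]
    [LieRingModule L M] [LieModule 𝕜 L M] [FiniteDimensional 𝕜 M] (N : LieSubmodule 𝕜 L M) :
    traceForm 𝕜 L M = traceForm 𝕜 L N + traceForm 𝕜 L (M ⧸ N) := by
  ext x y
  have hN : (N : Submodule 𝕜 M) ≤ (N : Submodule 𝕜 M).comap (toEnd 𝕜 L M x ∘ₗ toEnd 𝕜 L M y) :=
    fun m hm ↦ N.lie_mem (N.lie_mem hm)
  simp only [LinearMap.add_apply, traceForm_apply_apply]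
  rw [trace_eq_trace_restrict_add_trace_mapQ _ _ hN]
  congr 2
  exact Submodule.linearMap_qext _ rfl

variable [FiniteDimensional 𝕜 L]

theorem LieSubalgebra.killingForm_coe_apply (H : LieSubalgebra 𝕜 L) (x y : H) :
    killingForm 𝕜 L x y = killingForm 𝕜 H x y + traceForm 𝕜 H (L ⧸ H.toLieSubmodule) x y := by
  change traceForm 𝕜 H L x y = _
  rw [traceForm_eq_add_traceForm_quotient H.toLieSubmodule]
  rfl

theorem LieSubalgebra.killingForm_inclusion {K H : LieSubalgebra 𝕜 L} (hKH : K ≤ H)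
    (hK : ∀ x ∈ K, ∀ y ∈ H, ⁅x, y⁆ ∈ K) (x y : K) :
    killingForm 𝕜 H (inclusion hKH x) (inclusion hKH y) = killingForm 𝕜 K x y := by
  have hf : ∀ z, (ad 𝕜 H (inclusion hKH x) ∘ₗ ad 𝕜 H (inclusion hKH y)) z ∈
      (K : Submodule 𝕜 L).comap (H : Submodule 𝕜 L).subtype :=
    fun z ↦ hK _ x.2 _ (⁅inclusion hKH y, z⁆ : H).2
  rw [killingForm_apply_apply, killingForm_apply_apply, ← trace_restrict_eq_of_forall_mem _ _ hf]
  exact (trace_conj' _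
    (Submodule.comapSubtypeEquivOfLe (show (K : Submodule 𝕜 L) ≤ H from hKH))).symm

theorem LieSubalgebra.killingForm_apply_eq_of_le {K H : LieSubalgebra 𝕜 L} (hKH : K ≤ H)
    (hK : ∀ x ∈ K, ∀ y ∈ H, ⁅x, y⁆ ∈ K) (x y : K) :
    killingForm 𝕜 L x y = killingForm 𝕜 K x y
      + traceForm 𝕜 H (L ⧸ H.toLieSubmodule) (inclusion hKH x) (inclusion hKH y) := by
  rw [← killingForm_inclusion hKH hK, ← killingForm_coe_apply]
  rfl

end TraceForm

/-- The form `κ − κ_c^𝔭` on `𝔭 = H`: `κ_c^𝔭` is minus the trace form of the `𝔭`-module `𝔤/𝔭`. -/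
noncomputable def LieSubalgebra.subCriticalForm {L : Type*} [LieRing L] [LieAlgebra ℂ L]
    (H : LieSubalgebra ℂ L) (κ : LinearMap.BilinForm ℂ L) : LinearMap.BilinForm ℂ H :=
  κ.compl₁₂ (H.incl : H →ₗ[ℂ] L) H.incl + LieModule.traceForm ℂ H (L ⧸ H.toLieSubmodule)

namespace LieSubalgebra

variable {L : Type*} [LieRing L] [LieAlgebra ℂ L] (H : LieSubalgebra ℂ L)
  (κ : LinearMap.BilinForm ℂ L)

theorem subCriticalForm_apply (x y : H) :
    H.subCriticalForm κ x y = κ x y + LieModule.traceForm ℂ H (L ⧸ H.toLieSubmodule) x y :=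
  rfl

theorem sub_kappaC_eq_subCriticalForm (x y : H) (hx hy) :
    κ x y - kappaC H.toSubmodule x y hx hy = H.subCriticalForm κ x y := by
  rw [subCriticalForm_apply, kappaC, LieModule.traceForm_apply_apply, sub_neg_eq_add]
  rfl

theorem subCriticalForm_lie_add (hκ : ∀ c x y : L, κ ⁅c, x⁆ y + κ x ⁅c, y⁆ = 0) (z x y : H) :
    H.subCriticalForm κ ⁅z, x⁆ y + H.subCriticalForm κ x ⁅z, y⁆ = 0 := by
  simp only [subCriticalForm_apply, coe_bracket, LieModule.traceForm_apply_lie_apply']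
  linear_combination hκ z x y

end LieSubalgebra

theorem Submodule.map₂_iSup₂_le {R M N P ι κ : Type*} [CommSemiring R] [AddCommMonoid M]
    [AddCommMonoid N] [AddCommMonoid P] [Module R M] [Module R N] [Module R P]
    (f : M →ₗ[R] N →ₗ[R] P) {S : Set ι} {T : Set κ} {A : ι → Submodule R M}
    {C : κ → Submodule R N} {W : Submodule R P}
    (h : ∀ i ∈ S, ∀ j ∈ T, map₂ f (A i) (C j) ≤ W) :
    map₂ f (⨆ i ∈ S, A i) (⨆ j ∈ T, C j) ≤ W := by
  simp only [map₂_iSup_left, map₂_iSup_right, iSup_le_iff]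
  exact fun j hj i hi ↦ h i hi j hj

theorem span_lie_sup_le {R L : Type*} [CommRing R] [LieRing L] [LieAlgebra R L]
    {l u : Submodule R L} (hlu : ∀ x ∈ l, ∀ y ∈ u, ⁅x, y⁆ ∈ u)
    (hu : ∀ x ∈ u, ∀ y ∈ l ⊔ u, ⁅x, y⁆ ∈ u) :
    Submodule.span R {z | ∃ x ∈ l ⊔ u, ∃ y ∈ l ⊔ u, z = ⁅x, y⁆}
      ≤ Submodule.span R {z | ∃ x ∈ l, ∃ y ∈ l, z = ⁅x, y⁆} ⊔ u := by
  refine Submodule.span_le.2 ?_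
  rintro _ ⟨x, hx, y, hy, rfl⟩
  obtain ⟨x₀, hx₀, x₁, hx₁, rfl⟩ := Submodule.mem_sup.1 hx
  obtain ⟨y₀, hy₀, y₁, hy₁, rfl⟩ := Submodule.mem_sup.1 hy
  rw [add_lie, lie_add]
  exact add_mem (add_mem (Submodule.mem_sup_left (Submodule.subset_span ⟨x₀, hx₀, y₀, hy₀, rfl⟩))
    (Submodule.mem_sup_right (hlu x₀ hx₀ y₁ hy₁))) (Submodule.mem_sup_right (hu x₁ hx₁ _ hy))

section Grading

variable {L : Type*} [LieRing L] [LieAlgebra ℂ L]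

noncomputable def adEigSup (ξ : L) (S : Set ℤ) : Submodule ℂ L :=
  ⨆ j ∈ S, adEig ξ j

variable {ξ : L}

theorem mem_adEig_iff {j : ℤ} {x : L} : x ∈ adEig ξ j ↔ ⁅ξ, x⁆ = (j : ℂ) • x := by
  rw [adEig, Module.End.mem_eigenspace_iff, LieAlgebra.ad_apply]

theorem adEig_le_adEigSup {S : Set ℤ} {j : ℤ} (hj : j ∈ S) : adEig ξ j ≤ adEigSup ξ S :=
  le_iSup₂ (f := fun i (_ : i ∈ S) ↦ adEig ξ i) j hj

theorem adEigSup_mono {S T : Set ℤ} (hST : S ⊆ T) : adEigSup ξ S ≤ adEigSup ξ T :=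
  biSup_mono hST

theorem adEig_zero_le_adEigSup_Iic : adEig ξ 0 ≤ adEigSup ξ (Set.Iic 0) :=
  adEig_le_adEigSup (Set.mem_Iic.2 le_rfl)

theorem adEigSup_Iio_le_adEigSup_Iic : adEigSup ξ (Set.Iio 0) ≤ adEigSup ξ (Set.Iic 0) :=
  adEigSup_mono Set.Iio_subset_Iic_self

theorem lie_mem_adEig_add {i j : ℤ} {x y : L} (hx : x ∈ adEig ξ i) (hy : y ∈ adEig ξ j) :
    ⁅x, y⁆ ∈ adEig ξ (i + j) := by
  rw [mem_adEig_iff] at hx hy ⊢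
  rw [leibniz_lie, hx, hy, smul_lie, lie_smul, Int.cast_add, add_smul]

theorem lie_mem_adEigSup {S T U : Set ℤ} (hST : ∀ i ∈ S, ∀ j ∈ T, i + j ∈ U) {x y : L}
    (hx : x ∈ adEigSup ξ S) (hy : y ∈ adEigSup ξ T) : ⁅x, y⁆ ∈ adEigSup ξ U := by
  refine Submodule.map₂_iSup₂_le (LieAlgebra.ad ℂ L : L →ₗ[ℂ] Module.End ℂ L)
    (fun i hi j hj ↦ Submodule.map₂_le.2 fun x hx y hy ↦ ?_) (Submodule.apply_mem_map₂ _ hx hy)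
  exact adEig_le_adEigSup (hST i hi j hj) (lie_mem_adEig_add hx hy)

theorem span_lie_adEig_zero_sup_neg_le :
    Submodule.span ℂ {z | ∃ x ∈ adEig ξ 0 ⊔ adEigSup ξ (Set.Iio 0),
        ∃ y ∈ adEig ξ 0 ⊔ adEigSup ξ (Set.Iio 0), z = ⁅x, y⁆}
      ≤ Submodule.span ℂ {z | ∃ x ∈ adEig ξ 0, ∃ y ∈ adEig ξ 0, z = ⁅x, y⁆}
        ⊔ adEigSup ξ (Set.Iio 0) := by
  refine span_lie_sup_le (fun x hx y hy ↦ ?_) (fun x hx y hy ↦ ?_)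
  · exact lie_mem_adEigSup (fun i hi j hj ↦ by simp at hi hj ⊢; omega)
      (adEig_zero_le_adEigSup_Iic hx) hy
  · exact lie_mem_adEigSup (fun i hi j hj ↦ by simp at hi hj ⊢; omega) hx
      (sup_le (adEig_zero_le_adEigSup_Iic (ξ := ξ)) adEigSup_Iio_le_adEigSup_Iic hy)

namespace LinearMap.BilinForm

variable (B : LinearMap.BilinForm ℂ L) (hB : ∀ x y, B ⁅ξ, x⁆ y + B x ⁅ξ, y⁆ = 0)
include hB

theorem apply_eq_zero_of_mem_adEig {i j : ℤ} (hij : i + j ≠ 0) {x y : L}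
    (hx : x ∈ adEig ξ i) (hy : y ∈ adEig ξ j) : B x y = 0 := by
  have h := hB x y
  rw [mem_adEig_iff.1 hx, mem_adEig_iff.1 hy, map_smul, smul_apply, map_smul, smul_eq_mul,
    smul_eq_mul, ← add_mul] at h
  exact (mul_eq_zero.1 h).resolve_left (by exact_mod_cast hij)

theorem apply_eq_zero_of_mem_adEigSup {S T : Set ℤ} (hST : ∀ i ∈ S, ∀ j ∈ T, i + j ≠ 0)
    {x y : L} (hx : x ∈ adEigSup ξ S) (hy : y ∈ adEigSup ξ T) : B x y = 0 := by
  refine Submodule.map₂_iSup₂_le (W := ⊥) B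
    (fun i hi j hj ↦ Submodule.map₂_le.2 fun x hx y hy ↦ ?_) (Submodule.apply_mem_map₂ _ hx hy)
  exact B.apply_eq_zero_of_mem_adEig hB (hST i hi j hj) hx hy

theorem apply_add_add_of_mem_adEigSup_neg {x₀ y₀ x₁ y₁ : L} (hx₀ : x₀ ∈ adEig ξ 0)
    (hy₀ : y₀ ∈ adEig ξ 0) (hx₁ : x₁ ∈ adEigSup ξ (Set.Iio 0))
    (hy₁ : y₁ ∈ adEigSup ξ (Set.Iio 0)) : B (x₀ + x₁) (y₀ + y₁) = B x₀ y₀ := by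
  have h₁ {x y} (hx : x ∈ adEigSup ξ (Set.Iic 0)) (hy : y ∈ adEigSup ξ (Set.Iio 0)) : B x y = 0 :=
    B.apply_eq_zero_of_mem_adEigSup hB (fun i hi j hj ↦ by simp at hi hj; omega) hx hy
  have h₂ {x y} (hx : x ∈ adEigSup ξ (Set.Iio 0)) (hy : y ∈ adEigSup ξ (Set.Iic 0)) : B x y = 0 :=
    B.apply_eq_zero_of_mem_adEigSup hB (fun i hi j hj ↦ by simp at hi hj; omega) hx hy
  simp only [map_add, LinearMap.add_apply, h₁ (adEig_zero_le_adEigSup_Iic hx₀) hy₁,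
    h₂ hx₁ (adEig_zero_le_adEigSup_Iic hy₀), h₂ hx₁ (adEigSup_Iio_le_adEigSup_Iic hy₁), add_zero]

end LinearMap.BilinForm

namespace LieSubalgebra

variable (H : LieSubalgebra ℂ L) (hξ : ξ ∈ H)
include hξ

theorem mem_adEig_iff (x : H) {j : ℤ} : x ∈ adEig (⟨ξ, hξ⟩ : H) j ↔ (x : L) ∈ adEig ξ j := by
  simp [_root_.mem_adEig_iff, Subtype.ext_iff]

theorem comap_adEigSup_le (S : Set ℤ) (hS : adEigSup ξ S ≤ H.toSubmodule) :
    (adEigSup ξ S).comap (H.incl : H →ₗ[ℂ] L) ≤ adEigSup (⟨ξ, hξ⟩ : H) S := by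
  have h : adEigSup ξ S ≤ (adEigSup (⟨ξ, hξ⟩ : H) S).map (H.incl : H →ₗ[ℂ] L) :=
    iSup₂_le fun j hj x hx ↦ ⟨⟨x, hS (adEig_le_adEigSup hj hx)⟩,
      adEig_le_adEigSup hj ((H.mem_adEig_iff hξ _).2 hx), rfl⟩
  exact (Submodule.comap_mono h).trans
    (Submodule.comap_map_eq_of_injective Subtype.val_injective _).le

theorem apply_eq_zero_of_mem_sup_adEigSup_neg (B : LinearMap.BilinForm ℂ H)
    (hB : ∀ x y, B ⁅(⟨ξ, hξ⟩ : H), x⁆ y + B x ⁅(⟨ξ, hξ⟩ : H), y⁆ = 0)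
    {D : Submodule ℂ L} (hD : D ≤ adEig ξ 0) (hneg : adEigSup ξ (Set.Iio 0) ≤ H.toSubmodule)
    (hBD : ∀ x y : H, (x : L) ∈ D → (y : L) ∈ D → B x y = 0) {x y : H}
    (hx : (x : L) ∈ D ⊔ adEigSup ξ (Set.Iio 0)) (hy : (y : L) ∈ D ⊔ adEigSup ξ (Set.Iio 0)) :
    B x y = 0 := by
  have split {z : H} (hz : (z : L) ∈ D ⊔ adEigSup ξ (Set.Iio 0)) : ∃ z₀ z₁ : H,
      z = z₀ + z₁ ∧ (z₀ : L) ∈ D ∧ z₁ ∈ adEigSup (⟨ξ, hξ⟩ : H) (Set.Iio 0) := by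
    obtain ⟨a, ha, b, hb, hab⟩ := Submodule.mem_sup.1 hz
    refine ⟨z - ⟨b, hneg hb⟩, ⟨b, hneg hb⟩, (sub_add_cancel _ _).symm, ?_,
      H.comap_adEigSup_le hξ _ hneg hb⟩
    simpa [← hab] using ha
  obtain ⟨x₀, x₁, rfl, hx₀, hx₁⟩ := split hx
  obtain ⟨y₀, y₁, rfl, hy₀, hy₁⟩ := split hy
  rw [B.apply_add_add_of_mem_adEigSup_neg hB ((H.mem_adEig_iff hξ _).2 (hD hx₀))
    ((H.mem_adEig_iff hξ _).2 (hD hy₀)) hx₁ hy₁]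
  exact hBD _ _ hx₀ hy₀

end LieSubalgebra

end Grading

theorem level_condition_iff_dual_killing_general
    (g : Type*) [LieRing g] [LieAlgebra ℂ g] [FiniteDimensional ℂ g]
    (ξ : g)
    (l ubar p : Submodule ℂ g)
    (hl : l = adEig ξ 0)
    (hubar : ubar = ⨆ j : ℤ, ⨆ _ : j < 0, adEig ξ j)
    (hp : p = l ⊔ ubar)
    (hpinv : ∀ a ∈ p, ∀ x ∈ p, ⁅a, x⁆ ∈ p)
    (hlp : l ≤ p)
    (dl : Submodule ℂ g)
    (hdl : dl = Submodule.span ℂ {z : g | ∃ x ∈ l, ∃ y ∈ l, z = ⁅x, y⁆})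
    (hdll : dl ≤ l)
    (DP : LieSubalgebra ℂ g)
    (hDP : (DP : Submodule ℂ g) = Submodule.span ℂ {z : g | ∃ x ∈ p, ∃ y ∈ p, z = ⁅x, y⁆})
    (κ : LinearMap.BilinForm ℂ g)
    (hκinv : ∀ c x y : g, κ ⁅c, x⁆ y + κ x ⁅c, y⁆ = 0) :
    (∀ a, ∀ ha : a ∈ dl, ∀ b, ∀ hb : b ∈ dl,
        κ a b - kappaC p a b
            (fun x hx => hpinv a (hlp (hdll ha)) x hx)
            (fun x hx => hpinv b (hlp (hdll hb)) x hx) = 0)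
      ↔ (∀ a b : DP,
          - κ (a : g) (b : g) - killingForm ℂ g (a : g) (b : g)
            = - killingForm ℂ DP a b) := by
  change ubar = adEigSup ξ (Set.Iio 0) at hubar
  subst hl hubar
  let P : LieSubalgebra ℂ g := { p with lie_mem' := fun ha hb ↦ hpinv _ ha _ hb }
  have hξ : ξ ∈ P := hlp (mem_adEig_iff.2 (by simp))
  have hneg : adEigSup ξ (Set.Iio 0) ≤ P.toSubmodule :=
    show _ ≤ p from hp ▸ le_sup_right
  have hDP_le : (DP : Submodule ℂ g) ≤ p :=
    hDP ▸ Submodule.span_le.2 fun _ ⟨x, hx, y, hy, h⟩ ↦ h ▸ hpinv x hx y hy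
  have hDP_ideal : ∀ x ∈ DP, ∀ y ∈ P, ⁅x, y⁆ ∈ DP := fun x hx y hy ↦
    (SetLike.ext_iff.1 hDP _).2 (Submodule.subset_span ⟨x, hDP_le hx, y, hy, rfl⟩)
  have hdl_le : dl ≤ DP :=
    hdl ▸ hDP ▸ Submodule.span_mono fun _ ⟨x, hx, y, hy, h⟩ ↦ ⟨x, hlp hx, y, hlp hy, h⟩
  have hDP_sup : (DP : Submodule ℂ g) ≤ dl ⊔ adEigSup ξ (Set.Iio 0) :=
    hDP ▸ hdl ▸ hp ▸ span_lie_adEig_zero_sup_neg_le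
  have hkill (a b : DP) : (-κ a b - killingForm ℂ g a b = -killingForm ℂ DP a b) ↔
      P.subCriticalForm κ (LieSubalgebra.inclusion hDP_le a)
        (LieSubalgebra.inclusion hDP_le b) = 0 := by
    rw [LieSubalgebra.killingForm_apply_eq_of_le hDP_le hDP_ideal, P.subCriticalForm_apply,
      LieSubalgebra.coe_inclusion, LieSubalgebra.coe_inclusion]
    constructor <;> intro h <;> linear_combination -h
  constructor
  · intro h a b
    refine (hkill a b).2 (P.apply_eq_zero_of_mem_sup_adEigSup_neg hξ _
      (P.subCriticalForm_lie_add κ hκinv _) hdll hneg (fun x y hx hy ↦ ?_)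
      (hDP_sup a.2) (hDP_sup b.2))
    exact (P.sub_kappaC_eq_subCriticalForm κ x y _ _).symm.trans (h _ hx _ hy)
  · intro h a ha b hb
    exact (P.sub_kappaC_eq_subCriticalForm κ ⟨a, hlp (hdll ha)⟩ ⟨b, hlp (hdll hb)⟩ _ _).trans
      ((hkill ⟨a, hdl_le ha⟩ ⟨b, hdl_le hb⟩).1 (h _ _))

/-- for an invariant symmetric bilinear form `κ` on `𝔤` with dual form
`κ* = −κ − κ_𝔤`, the form `κ − κ_c^𝔭` vanishes on `⁅𝔩,𝔩⁆ × ⁅𝔩,𝔩⁆` iff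
`κ*(a,b) = −κ_{⁅𝔭,𝔭⁆}(a,b)` for all `a,b` in the derived subalgebra `⁅𝔭,𝔭⁆`. -/
theorem level_condition_iff_dual_killing
    (g : Type*) [LieRing g] [LieAlgebra ℂ g] [FiniteDimensional ℂ g]
    [LieAlgebra.IsSemisimple ℂ g]
    (ξ : g)
    (hdiag : ⨆ j : ℤ, adEig ξ j = ⊤)
    (l u ubar p : Submodule ℂ g)
    (hl : l = adEig ξ 0)
    (hu : u = ⨆ j : ℤ, ⨆ _ : 0 < j, adEig ξ j)
    (hubar : ubar = ⨆ j : ℤ, ⨆ _ : j < 0, adEig ξ j)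
    (hp : p = l ⊔ ubar)
    (hpinv : ∀ a ∈ p, ∀ x ∈ p, ⁅a, x⁆ ∈ p)
    (hlp : l ≤ p)
    (dl : Submodule ℂ g)
    (hdl : dl = Submodule.span ℂ {z : g | ∃ x ∈ l, ∃ y ∈ l, z = ⁅x, y⁆})
    (hdll : dl ≤ l)
    (DP : LieSubalgebra ℂ g)
    (hDP : (DP : Submodule ℂ g) = Submodule.span ℂ {z : g | ∃ x ∈ p, ∃ y ∈ p, z = ⁅x, y⁆})
    (κ : LinearMap.BilinForm ℂ g)
    (hκsymm : ∀ x y : g, κ x y = κ y x)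
    (hκinv : ∀ c x y : g, κ ⁅c, x⁆ y + κ x ⁅c, y⁆ = 0) :
    (∀ a, ∀ ha : a ∈ dl, ∀ b, ∀ hb : b ∈ dl,
        κ a b - kappaC p a b
            (fun x hx => hpinv a (hlp (hdll ha)) x hx)
            (fun x hx => hpinv b (hlp (hdll hb)) x hx) = 0)
      ↔ (∀ a b : DP,
          - κ (a : g) (b : g) - killingForm ℂ g (a : g) (b : g)
            = - killingForm ℂ DP a b) :=
  level_condition_iff_dual_killing_general g ξ l ubar p hl hubar hp hpinv hlp dl hdl hdll DP hDP κ
    hκinv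
end

section
/- Let x, y : V → V be linear endomorphisms such that x(L) ⊆ L, y(L) ⊆ L, and ω(x(u), v) + ω(u, x(v)) = 0 and ω(y(u), v) + ω(u, y(v)) = 0 for all u, v ∈ V. Then tr_V(x∘y) = 2·tr_L((x∘y)|_L), i.e. the trace of x∘y on V is twice the trace of its restriction to L. -/
/-!
Since `ω` is nondegenerate and `L` is Lagrangian, the pairing `v ↦ ω(·, v)|_L` identifies `V ⧸ L`
with the dual of `L`. Skewness of `x` and `y` gives `ω(l, x y v) = ω(y x l, v)`, so under this
identification the map induced by `x ∘ y` on `V ⧸ L` is the transpose of `(y ∘ x)|_L`. Hence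
`tr_V(x y) = tr_L(x y) + tr_{V/L}(x y) = tr_L(x y) + tr_L(y x) = 2 tr_L(x y)`.
-/

open Module LinearMap

namespace LinearMap

theorem trace_eq_trace_restrict_add_trace_mapQ_s9 {K V : Type*} [Field K] [AddCommGroup V]
    [Module K V] [FiniteDimensional K V] (p : Submodule K V) (f : V →ₗ[K] V)
    (hf : ∀ v ∈ p, f v ∈ p) :
    trace K V f = trace K p (f.restrict hf) + trace K (V ⧸ p) (p.mapQ p f hf) := by
  obtain ⟨q, hpq⟩ := p.exists_isCompl
  set πp := p.projectionOnto q hpq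
  set πq := q.projectionOnto p hpq.symm
  have hid : p.subtype ∘ₗ πp + q.subtype ∘ₗ πq = LinearMap.id :=
    Submodule.projection_add_projection_eq_id hpq
  have hrestrict : πp ∘ₗ f ∘ₗ p.subtype = f.restrict hf := by
    ext v
    simp [πp, Submodule.projectionOnto_apply_of_mem_left hpq (hf v v.2)]
  have hquot : πq ∘ₗ f ∘ₗ q.subtype = (p.quotientEquivOfIsCompl q hpq).conj (p.mapQ p f hf) := by
    ext w
    simp [πq, LinearEquiv.conj_apply]
  calc trace K V f
      = trace K V ((f ∘ₗ p.subtype) ∘ₗ πp) + trace K V ((f ∘ₗ q.subtype) ∘ₗ πq) := by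
        rw [← map_add, comp_assoc, comp_assoc, ← comp_add, hid, comp_id]
    _ = trace K p (f.restrict hf) + trace K (V ⧸ p) (p.mapQ p f hf) := by
        rw [trace_comp_comm' πp, trace_comp_comm' πq, hrestrict, hquot, trace_conj']

theorem trace_mapQ_eq_of_comp_eq {R V M : Type*} [CommRing R] [AddCommGroup V] [Module R V]
    [AddCommGroup M] [Module R M] (g : V →ₗ[R] M) (hg : Function.Surjective g)
    (p : Submodule R V) (hker : ker g = p) (f : V →ₗ[R] V) (hf : ∀ v ∈ p, f v ∈ p)
    (h : M →ₗ[R] M) (hfh : g ∘ₗ f = h ∘ₗ g) :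
    trace R (V ⧸ p) (p.mapQ p f hf) = trace R M h := by
  let e : (V ⧸ p) ≃ₗ[R] M := (p.quotEquivOfEq _ hker.symm).trans (g.quotKerEquivOfSurjective hg)
  have he : ∀ v, e (Submodule.Quotient.mk v) = g v := fun _ => rfl
  rw [← trace_conj' _ e]
  congr 1
  ext m
  obtain ⟨v, rfl⟩ := hg m
  rw [LinearEquiv.conj_apply_apply, ← he v, e.symm_apply_apply]
  exact LinearMap.congr_fun hfh v

theorem trace_dualMap {R M : Type*} [CommRing R] [AddCommGroup M] [Module R M] [Module.Free R M]
    [Module.Finite R M] (f : M →ₗ[R] M) : trace R (Dual R M) f.dualMap = trace R M f :=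
  trace_transpose' f

end LinearMap

namespace LinearMap.BilinForm

variable {K V : Type*} [Field K] [AddCommGroup V] [Module K V] {ω : LinearMap.BilinForm K V}
  {L : Submodule K V}

theorem dualRestrict_comp_flip_comp_comp {x y : V →ₗ[K] V} (hxL : ∀ v ∈ L, x v ∈ L)
    (hyL : ∀ v ∈ L, y v ∈ L) (hxω : ∀ u v : V, ω (x u) v + ω u (x v) = 0)
    (hyω : ∀ u v : V, ω (y u) v + ω u (y v) = 0) :
    (L.dualRestrict ∘ₗ ω.flip) ∘ₗ (x ∘ₗ y)
      = (y.restrict hyL ∘ₗ x.restrict hxL).dualMap ∘ₗ (L.dualRestrict ∘ₗ ω.flip) := by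
  ext v l
  simp only [coe_comp, Function.comp_apply, Submodule.dualRestrict_apply, flip_apply,
    dualMap_apply, coe_restrict_apply]
  linear_combination hxω l (y v) - hyω (x l) v

variable [FiniteDimensional K V]

theorem dualRestrict_comp_flip_surjective (hω : ω.SeparatingLeft) (L : Submodule K V) :
    Function.Surjective (L.dualRestrict ∘ₗ ω.flip) := by
  have hfactor : L.dualRestrict ∘ₗ ω.flip = (ω ∘ₗ L.subtype).dualMap ∘ₗ Dual.eval K V := rfl
  have hinj : Function.Injective (ω ∘ₗ L.subtype) :=
    (ker_eq_bot.mp (separatingLeft_iff_ker_eq_bot.mp hω)).comp L.injective_subtype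
  rw [hfactor]
  exact (dualMap_surjective_of_injective hinj).comp (evalEquiv K V).surjective

theorem ker_dualRestrict_comp_flip_eq (hω : ω.SeparatingLeft)
    (hL0 : ∀ u ∈ L, ∀ v ∈ L, ω u v = 0) (hLdim : 2 * finrank K L = finrank K V) :
    ker (L.dualRestrict ∘ₗ ω.flip) = L := by
  refine (Submodule.eq_of_le_of_finrank_eq (fun v hv => ?_) ?_).symm
  · ext l
    exact hL0 l l.2 v hv
  · have hrank := finrank_range_add_finrank_ker (L.dualRestrict ∘ₗ ω.flip)
    rw [range_eq_top.mpr (dualRestrict_comp_flip_surjective hω L), finrank_top,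
      Subspace.dual_finrank_eq] at hrank
    omega

end LinearMap.BilinForm

open LinearMap.BilinForm in
theorem trace_eq_two_mul_trace_restrict_lagrangian_general
    (K : Type*) [Field K]
    (V : Type*) [AddCommGroup V] [Module K V] [FiniteDimensional K V]
    (ω : LinearMap.BilinForm K V)
    (hnd : ∀ v : V, (∀ w : V, ω v w = 0) → v = 0)
    (L : Submodule K V)
    (hL0 : ∀ u ∈ L, ∀ v ∈ L, ω u v = 0)
    (hLdim : 2 * Module.finrank K L = Module.finrank K V)
    (x y : V →ₗ[K] V)
    (hxL : ∀ v ∈ L, x v ∈ L) (hyL : ∀ v ∈ L, y v ∈ L)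
    (hxω : ∀ u v : V, ω (x u) v + ω u (x v) = 0)
    (hyω : ∀ u v : V, ω (y u) v + ω u (y v) = 0) :
    LinearMap.trace K V (x ∘ₗ y)
      = 2 * LinearMap.trace K L ((x ∘ₗ y).restrict (fun v hv => hxL _ (hyL v hv))) := by
  have hxyL : ∀ v ∈ L, (x ∘ₗ y) v ∈ L := fun v hv => hxL _ (hyL v hv)
  have hquot := trace_mapQ_eq_of_comp_eq _ (dualRestrict_comp_flip_surjective hnd L) L
    (ker_dualRestrict_comp_flip_eq hnd hL0 hLdim) _ hxyL _
    (dualRestrict_comp_flip_comp_comp hxL hyL hxω hyω)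
  rw [trace_eq_trace_restrict_add_trace_mapQ_s9 L (x ∘ₗ y) hxyL, hquot,
    trace_dualMap, trace_comp_comm', ← restrict_comp hyL hxL, two_mul]

/-- if `V` is a finite-dimensional vector space over a field of characteristic
zero, `ω` a nondegenerate alternating bilinear form on `V`, `L` a Lagrangian subspace, and
`x, y` endomorphisms preserving `L` and infinitesimally symplectic for `ω`, then
`tr_V(x∘y) = 2·tr_L((x∘y)|_L)`. -/
theorem trace_eq_two_mul_trace_restrict_lagrangian
    (K : Type*) [Field K] [CharZero K]
    (V : Type*) [AddCommGroup V] [Module K V] [FiniteDimensional K V]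
    (ω : LinearMap.BilinForm K V)
    (halt : ∀ v : V, ω v v = 0)
    (hnd : ∀ v : V, (∀ w : V, ω v w = 0) → v = 0)
    (L : Submodule K V)
    (hL0 : ∀ u ∈ L, ∀ v ∈ L, ω u v = 0)
    (hLdim : 2 * Module.finrank K L = Module.finrank K V)
    (x y : V →ₗ[K] V)
    (hxL : ∀ v ∈ L, x v ∈ L) (hyL : ∀ v ∈ L, y v ∈ L)
    (hxω : ∀ u v : V, ω (x u) v + ω u (x v) = 0)
    (hyω : ∀ u v : V, ω (y u) v + ω u (y v) = 0) :
    LinearMap.trace K V (x ∘ₗ y)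
      = 2 * LinearMap.trace K L ((x ∘ₗ y).restrict (fun v hv => hxL _ (hyL v hv))) :=
  trace_eq_two_mul_trace_restrict_lagrangian_general K V ω hnd L hL0 hLdim x y hxL hyL hxω hyω
end

section
/- Let 𝔤 be a finite-dimensional semisimple Lie algebra over ℂ, let (e,h,f) be an sl₂-triple in 𝔤 (⁅h,e⁆ = 2e, ⁅h,f⁆ = −2f, ⁅e,f⁆ = h), and let x ∈ 𝔤 satisfy ⁅e,x⁆ = 0, ⁅h,x⁆ = 0 and ⁅f,x⁆ = 0. If ad(f + x) is a nilpotent endomorphism of 𝔤, then ad(x) is a nilpotent endomorphism of 𝔤. -/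
/-!
Since `⁅ad h, ad f⁆ = -2 • ad f`, the map `ad f` sends each generalized eigenspace of `ad h` for
`μ` into the one for `μ - 2`; as `ad h` has only finitely many eigenvalues, every vector is killed
by a power of `ad f`, so `ad f` is nilpotent. Since `⁅f, x⁆ = 0`, `ad x = ad (f + x) - ad f` is a
difference of commuting nilpotent endomorphisms.
-/

open LieAlgebra

attribute [local instance 100] LieRing.ofAssociativeRing

namespace Module.End

section CommRing

variable {R M : Type*} [CommRing R] [AddCommGroup M] [Module R M] {A B : End R M} {c : R}

lemma sub_smul_one_pow_mul_of_lie_eq_smul (hAB : ⁅A, B⁆ = c • B) (μ : R) (k : ℕ) :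
    (A - (μ + c) • 1) ^ k * B = B * (A - μ • 1) ^ k := by
  have hAB' : A * B = B * A + c • B := by rw [← sub_eq_iff_eq_add', ← Ring.lie_def, hAB]
  have hstep : (A - (μ + c) • 1) * B = B * (A - μ • 1) := by
    rw [sub_mul, mul_sub, hAB', smul_mul_assoc, mul_smul_comm, one_mul, mul_one, add_smul]
    abel
  induction k with
  | zero => simp
  | succ k ih => rw [pow_succ, mul_assoc, hstep, ← mul_assoc, ih, mul_assoc, ← pow_succ]

lemma mapsTo_maxGenEigenspace_add_of_lie_eq_smul (hAB : ⁅A, B⁆ = c • B) (μ : R) :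
    Set.MapsTo B (A.maxGenEigenspace μ) (A.maxGenEigenspace (μ + c)) := by
  intro v hv
  rw [SetLike.mem_coe, mem_maxGenEigenspace] at hv ⊢
  obtain ⟨k, hk⟩ := hv
  refine ⟨k, ?_⟩
  rw [← mul_apply, sub_smul_one_pow_mul_of_lie_eq_smul hAB, mul_apply, hk, map_zero]

lemma pow_apply_mem_maxGenEigenspace_of_lie_eq_smul (hAB : ⁅A, B⁆ = c • B) {μ : R} {v : M}
    (hv : v ∈ A.maxGenEigenspace μ) (n : ℕ) :
    (B ^ n) v ∈ A.maxGenEigenspace (μ + n • c) := by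
  induction n with
  | zero => simpa using hv
  | succ n ih =>
    rw [pow_succ', mul_apply, succ_nsmul, ← add_assoc]
    exact mapsTo_maxGenEigenspace_add_of_lie_eq_smul hAB _ ih

end CommRing

variable {K V : Type*} [Field K] [AddCommGroup V] [Module K V] [FiniteDimensional K V]

lemma exists_maxGenEigenspace_add_nsmul_eq_bot [CharZero K] (A : End K V) (μ : K) {c : K}
    (hc : c ≠ 0) : ∃ n : ℕ, A.maxGenEigenspace (μ + n • c) = ⊥ := by
  have hinj : Function.Injective fun n : ℕ ↦ μ + n • c := fun m n hmn ↦ by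
    simpa [hc] using hmn
  obtain ⟨n, hn⟩ : ∃ n : ℕ, ¬ A.HasEigenvalue (μ + n • c) := by
    by_contra! h
    exact Set.infinite_of_injective_forall_mem hinj h A.finite_hasEigenvalue
  refine ⟨n, ?_⟩
  rwa [HasEigenvalue, ← hasUnifEigenvalue_iff_hasUnifEigenvalue_one ENat.top_pos,
    HasUnifEigenvalue, not_not] at hn

lemma isNilpotent_of_lie_eq_smul [IsAlgClosed K] [CharZero K] {A B : End K V} {c : K}
    (hc : c ≠ 0) (hAB : ⁅A, B⁆ = c • B) : IsNilpotent B := by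
  refine isNilpotent_iff_of_finite.mpr fun v ↦ ?_
  have hv : v ∈ ⨆ μ, A.maxGenEigenspace μ := by simp [iSup_maxGenEigenspace_eq_top]
  induction hv using Submodule.iSup_induction' with
  | mem μ w hw =>
    obtain ⟨n, hn⟩ := exists_maxGenEigenspace_add_nsmul_eq_bot A μ hc
    have hBw := pow_apply_mem_maxGenEigenspace_of_lie_eq_smul hAB hw n
    rw [hn, Submodule.mem_bot] at hBw
    exact ⟨n, hBw⟩
  | zero => exact ⟨0, map_zero _⟩
  | add w₁ w₂ _ _ hw₁ hw₂ =>
    obtain ⟨n₁, hn₁⟩ := hw₁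
    obtain ⟨n₂, hn₂⟩ := hw₂
    refine ⟨max n₁ n₂, ?_⟩
    rw [map_add, pow_map_zero_of_le le_sup_left hn₁, pow_map_zero_of_le le_sup_right hn₂,
      add_zero]

end Module.End

theorem ad_nilpotent_of_ad_add_nilpotent_general
    (g : Type*) [LieRing g] [LieAlgebra ℂ g] [FiniteDimensional ℂ g]
    (h f : g)
    (hhf : ⁅h, f⁆ = (-2 : ℂ) • f)
    (x : g)
    (hxf : ⁅f, x⁆ = 0)
    (hnil : IsNilpotent (LieAlgebra.ad ℂ g (f + x))) :
    IsNilpotent (LieAlgebra.ad ℂ g x) := by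
  have hf : IsNilpotent (ad ℂ g f) :=
    Module.End.isNilpotent_of_lie_eq_smul (c := -2) (by norm_num)
      (by rw [← LieHom.map_lie, hhf, map_smul])
  have hfx : Commute (ad ℂ g f) (ad ℂ g x) := by
    rw [commute_iff_lie_eq, ← LieHom.map_lie, hxf, map_zero]
  have hcomm : Commute (ad ℂ g (f + x)) (ad ℂ g f) := by
    rw [map_add]
    exact (Commute.refl _).add_left hfx.symm
  simpa using hcomm.isNilpotent_sub hnil hf

/-- let `𝔤` be a finite-dimensional semisimple complex Lie algebra,
`(e,h,f)` an sl₂-triple, and `x` an element of the centralizer of the triple.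
If `ad (f + x)` is nilpotent, then `ad x` is nilpotent. -/
theorem ad_nilpotent_of_ad_add_nilpotent
    (g : Type*) [LieRing g] [LieAlgebra ℂ g] [FiniteDimensional ℂ g]
    [LieAlgebra.IsSemisimple ℂ g]
    (e h f : g)
    (hhe : ⁅h, e⁆ = (2 : ℂ) • e) (hhf : ⁅h, f⁆ = (-2 : ℂ) • f) (hef : ⁅e, f⁆ = h)
    (x : g)
    (hxe : ⁅e, x⁆ = 0) (hxh : ⁅h, x⁆ = 0) (hxf : ⁅f, x⁆ = 0)
    (hnil : IsNilpotent (LieAlgebra.ad ℂ g (f + x))) :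
    IsNilpotent (LieAlgebra.ad ℂ g x) :=
  ad_nilpotent_of_ad_add_nilpotent_general g h f hhf x hxf hnil
end
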